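/- arXiv:quant-ph/0301038 — 7 statements merged into one kernel-verified Lean document; each statement's English description precedes it below -/
import Mathlib

section
/- Let n ≥ 1 and let r, r' ∈ ℝⁿ satisfy r_k > r'_k ≥ 0 for every k = 1, …, n. Define r'' ∈ ℝⁿ by cosh(r''_k) = (cosh(r_k)·cosh(r'_k) − 1)/(cosh(r_k) − cosh(r'_k)), r''_k ≥ 0, and set Γ := [[c(r''), s(r'')],[s(r''), c(r'')]] (a real symmetric 4n×4n matrix). Then: (i) Γ + i·σ_{2n} is positive semidefinite; (ii) writing Γ̃ := (I_{2n} ⊕ Λ̄) Γ (I_{2n} ⊕ Λ̄) with Λ̄ := ⊕_{k=1}^n Λ, the matrix Γ̃₂ + c(r) = c(r'') + c(r) is invertible and Γ₁ − Γ̃₁₂ (Γ̃₂ + c(r))⁻¹ Γ̃₁₂ᵀ = c(r'), c(r) − s(r) (Γ̃₂ + c(r))⁻¹ s(r) = c(r'), and Γ̃₁₂ (Γ̃₂ + c(r))⁻¹ s(r) = s(r'). (This is the sufficiency direction of the GLOCC pure-state transformation criterion: if r > r' entrywise, the unilateral Gaussian operation given by the product of two-mode squeezed covariance matrices with parameters r''_k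 transforms the state with covariance matrix [[c(r), s(r)],[s(r), c(r)]] into the one with blocks c(r'), s(r'), with no symplectic correction needed on the B side.) -/
open Matrix
open scoped ComplexOrder

/-- The standard symplectic form `σ_m = ⊕_{i=1}^m [[0,-1],[1,0]]` on `ℝ^{2m}`. -/
noncomputable def symp (m : ℕ) : Matrix (Fin (2 * m)) (Fin (2 * m)) ℝ :=
  Matrix.of fun i j =>
    if i.val = j.val + 1 ∧ i.val % 2 = 1 then 1
    else if j.val = i.val + 1 ∧ j.val % 2 = 1 then -1 else 0

/-- `σ_{2m} = σ_m ⊕ σ_m`, the symplectic form on the bipartite `(m + m)`-mode system. -/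
noncomputable def sympBig (m : ℕ) :
    Matrix (Fin (2 * m) ⊕ Fin (2 * m)) (Fin (2 * m) ⊕ Fin (2 * m)) ℝ :=
  Matrix.fromBlocks (symp m) 0 0 (symp m)

/-- `c(r) = ⊕_k cosh(r_k)·I₂`. -/
noncomputable def cmat {n : ℕ} (r : Fin n → ℝ) : Matrix (Fin (2 * n)) (Fin (2 * n)) ℝ :=
  Matrix.diagonal fun i => Real.cosh (r ⟨i.val / 2, by have := i.isLt; omega⟩)

/-- `s(r) = ⊕_k sinh(r_k)·Λ`, `Λ = diag(1,-1)`. -/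
noncomputable def smat {n : ℕ} (r : Fin n → ℝ) : Matrix (Fin (2 * n)) (Fin (2 * n)) ℝ :=
  Matrix.diagonal fun i =>
    (if i.val % 2 = 0 then (1 : ℝ) else -1) * Real.sinh (r ⟨i.val / 2, by have := i.isLt; omega⟩)

/-- `Λ̄ = ⊕_{k=1}^n Λ = diag(1,-1,…,1,-1)`. -/
noncomputable def lambdaBar (n : ℕ) : Matrix (Fin (2 * n)) (Fin (2 * n)) ℝ :=
  Matrix.diagonal fun i => if i.val % 2 = 0 then (1 : ℝ) else -1

lemma scalar_key (x y z : ℝ) (hy : 0 ≤ y) (hxy : y < x) (hz : 0 ≤ z)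
    (h : Real.cosh z = (Real.cosh x * Real.cosh y - 1) / (Real.cosh x - Real.cosh y)) :
    Real.cosh z - Real.sinh z * (Real.cosh z + Real.cosh x)⁻¹ * Real.sinh z = Real.cosh y ∧
    Real.cosh x - Real.sinh x * (Real.cosh z + Real.cosh x)⁻¹ * Real.sinh x = Real.cosh y ∧
    Real.sinh z * (Real.cosh z + Real.cosh x)⁻¹ * Real.sinh x = Real.sinh y := by
  have hx0 : 0 < x := lt_of_le_of_lt hy hxy
  have hba : Real.cosh y < Real.cosh x := by
    rw [Real.cosh_lt_cosh, abs_of_nonneg hy, abs_of_pos hx0]; exact hxy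
  have hd : 0 < Real.cosh x - Real.cosh y := sub_pos.2 hba
  have hsx : 0 < Real.sinh x := Real.sinh_pos_iff.2 hx0
  have hsy : 0 ≤ Real.sinh y := Real.sinh_nonneg_iff.2 hy
  have hsz : 0 ≤ Real.sinh z := Real.sinh_nonneg_iff.2 hz
  have hq : Real.cosh z * (Real.cosh x - Real.cosh y) = Real.cosh x * Real.cosh y - 1 := by
    rw [h]; field_simp
  have hdenpos : 0 < Real.cosh z + Real.cosh x := by
    have := Real.cosh_pos (x := z); have := Real.cosh_pos (x := x); linarith
  have hdne : Real.cosh z + Real.cosh x ≠ 0 := ne_of_gt hdenpos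
  -- sinh z explicitly
  have hz2 : Real.sinh z ^ 2 * (Real.cosh x - Real.cosh y) ^ 2
      = (Real.sinh x * Real.sinh y) ^ 2 := by
    rw [Real.sinh_sq z, h]
    field_simp
    linear_combination (-(Real.sinh y ^ 2)) * Real.sinh_sq x
      - (Real.cosh x ^ 2 - 1) * Real.sinh_sq y
  have hzsq : Real.sinh z ^ 2 = (Real.sinh x * Real.sinh y / (Real.cosh x - Real.cosh y)) ^ 2 := by
    rw [div_pow, eq_div_iff (pow_ne_zero 2 hd.ne')]
    exact hz2
  have hszeq : Real.sinh z = Real.sinh x * Real.sinh y / (Real.cosh x - Real.cosh y) := by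
    have h2 : 0 ≤ Real.sinh x * Real.sinh y / (Real.cosh x - Real.cosh y) :=
      div_nonneg (mul_nonneg hsx.le hsy) hd.le
    rw [← Real.sqrt_sq hsz, hzsq, Real.sqrt_sq h2]
  have key1 : Real.sinh z ^ 2 = (Real.cosh z - Real.cosh y) * (Real.cosh z + Real.cosh x) := by
    linear_combination Real.sinh_sq z - hq
  have key2 : Real.sinh x ^ 2 = (Real.cosh x - Real.cosh y) * (Real.cosh z + Real.cosh x) := by
    linear_combination Real.sinh_sq x - hq
  have key3 : Real.sinh z * Real.sinh x = Real.sinh y * (Real.cosh z + Real.cosh x) := by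
    rw [hszeq, div_mul_eq_mul_div, div_eq_iff hd.ne']
    linear_combination Real.sinh y * key2
  refine ⟨?_, ?_, ?_⟩
  · have e : Real.sinh z * (Real.cosh z + Real.cosh x)⁻¹ * Real.sinh z
        = Real.sinh z ^ 2 / (Real.cosh z + Real.cosh x) := by ring
    rw [e, key1, mul_div_assoc, div_self hdne, mul_one]; ring
  · have e : Real.sinh x * (Real.cosh z + Real.cosh x)⁻¹ * Real.sinh x
        = Real.sinh x ^ 2 / (Real.cosh z + Real.cosh x) := by ring
    rw [e, key2, mul_div_assoc, div_self hdne, mul_one]; ring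
  · have e : Real.sinh z * (Real.cosh z + Real.cosh x)⁻¹ * Real.sinh x
        = Real.sinh z * Real.sinh x / (Real.cosh z + Real.cosh x) := by ring
    rw [e, key3, mul_div_assoc, div_self hdne, mul_one]


-- half-angle real identities
lemma cosh_half (u : ℝ) : Real.cosh (u/2) * Real.cosh (u/2) + Real.sinh (u/2) * Real.sinh (u/2)
    = Real.cosh u := by
  have h := Real.cosh_two_mul (u/2)
  rw [show 2*(u/2) = u by ring] at h
  nlinarith [h]

lemma cosh_half_sub (u : ℝ) : Real.cosh (u/2) * Real.cosh (u/2) - Real.sinh (u/2) * Real.sinh (u/2)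
    = 1 := by
  have h := Real.cosh_sq_sub_sinh_sq (u/2); nlinarith [h]

lemma sinh_half (u : ℝ) : Real.cosh (u/2) * Real.sinh (u/2) + Real.sinh (u/2) * Real.cosh (u/2)
    = Real.sinh u := by
  have h := Real.sinh_two_mul (u/2)
  rw [show 2*(u/2) = u by ring] at h
  nlinarith [h]

-- the two factor blocks
noncomputable def Umat (n : ℕ) (t : Fin n → ℝ) : Matrix (Fin (2*n)) (Fin (2*n)) ℂ :=
  Matrix.of fun i j =>
    if (j : ℕ) = 2 * ((i : ℕ) / 2) then
      (if (i : ℕ) % 2 = 0 then 1 else Complex.I) *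
        Complex.ofReal (Real.cosh (t ⟨(i : ℕ)/2, by have := i.isLt; omega⟩ / 2))
    else 0

noncomputable def Vmat (n : ℕ) (t : Fin n → ℝ) : Matrix (Fin (2*n)) (Fin (2*n)) ℂ :=
  Matrix.of fun i j =>
    if (j : ℕ) = 2 * ((i : ℕ) / 2) then
      (if (i : ℕ) % 2 = 0 then 1 else -Complex.I) *
        Complex.ofReal (Real.sinh (t ⟨(i : ℕ)/2, by have := i.isLt; omega⟩ / 2))
    else 0

lemma sum_if_mul {m : ℕ} (c₁ c₂ : ℕ) (hc : c₁ < m) (a b : ℂ) :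
    (∑ j : Fin m, (if (j : ℕ) = c₁ then a else 0) * (if (j : ℕ) = c₂ then b else 0))
      = if c₁ = c₂ then a * b else 0 := by
  rcases eq_or_ne c₁ c₂ with hcc | hcc
  · subst hcc
    rw [if_pos rfl]
    have h : ∀ j : Fin m, (if (j:ℕ) = c₁ then a else 0) * (if (j:ℕ) = c₁ then b else 0)
        = if j = (⟨c₁, hc⟩ : Fin m) then a * b else 0 := by
      intro j
      by_cases hj : (j : ℕ) = c₁ <;> simp [hj, Fin.ext_iff]
    simp only [h]
    simp
  · rw [if_neg hcc]
    apply Finset.sum_eq_zero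
    intro j _
    by_cases hj : (j : ℕ) = c₁
    · rw [if_neg (show ¬(j:ℕ) = c₂ by omega), mul_zero]
    · rw [if_neg hj, zero_mul]


lemma L1 (n : ℕ) (t : Fin n → ℝ) :
    (cmat t).map Complex.ofReal + Complex.I • (symp n).map Complex.ofReal
      = Umat n t * (Umat n t)ᴴ + Vmat n t * (Vmat n t)ᴴ := by
  ext i k
  have hb : 2 * ((i : ℕ) / 2) < 2 * n := by have := i.isLt; omega
  simp only [Matrix.add_apply, Matrix.mul_apply, Matrix.conjTranspose_apply, Matrix.map_apply,
    Matrix.smul_apply, smul_eq_mul, Umat, Vmat, Matrix.of_apply,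
    apply_ite (star : ℂ → ℂ), star_zero]
  rw [sum_if_mul _ _ hb, sum_if_mul _ _ hb]
  simp only [cmat, Matrix.diagonal_apply, symp, Matrix.of_apply]
  by_cases him : (i : ℕ) / 2 = (k : ℕ) / 2
  · have hC : (⟨(k : ℕ)/2, by have := k.isLt; omega⟩ : Fin n)
        = ⟨(i : ℕ)/2, by have := i.isLt; omega⟩ := Fin.ext him.symm
    rw [hC]
    have hcond : 2 * ((i:ℕ)/2) = 2 * ((k:ℕ)/2) := by omega
    rw [if_pos hcond, if_pos hcond]
    set u := t ⟨(i : ℕ)/2, by have := i.isLt; omega⟩ with hu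
    have hC2 : (Real.cosh (u/2) : ℂ) * (Real.cosh (u/2) : ℂ)
        + (Real.sinh (u/2) : ℂ) * (Real.sinh (u/2) : ℂ) = ((Real.cosh u : ℝ) : ℂ) := by
      rw [← Complex.ofReal_mul, ← Complex.ofReal_mul, ← Complex.ofReal_add, cosh_half]
    have hS2 : (Real.cosh (u/2) : ℂ) * (Real.cosh (u/2) : ℂ)
        - (Real.sinh (u/2) : ℂ) * (Real.sinh (u/2) : ℂ) = 1 := by
      rw [← Complex.ofReal_mul, ← Complex.ofReal_mul, ← Complex.ofReal_sub, cosh_half_sub,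
        Complex.ofReal_one]
    rcases (by omega : (i : ℕ) = (k : ℕ) ∨ ((i:ℕ) % 2 = 0 ∧ (k:ℕ) = (i:ℕ)+1)
        ∨ ((k:ℕ) % 2 = 0 ∧ (i:ℕ) = (k:ℕ)+1)) with hik | ⟨hp, hik⟩ | ⟨hp, hik⟩
    · have hik' : i = k := Fin.ext hik
      subst hik'
      rw [if_pos rfl, if_neg (show ¬((i:ℕ) = (i:ℕ)+1 ∧ (i:ℕ) % 2 = 1) by omega),
        if_neg (show ¬((i:ℕ) = (i:ℕ)+1 ∧ (i:ℕ) % 2 = 1) by omega)]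
      by_cases hp : (i : ℕ) % 2 = 0
      · simp only [hp, reduceIte]
        simp only [one_mul, star_mul', star_one, star_neg, Complex.star_def, Complex.conj_I, Complex.conj_ofReal, Complex.ofReal_zero, Complex.ofReal_one, Complex.ofReal_neg, Complex.ofReal_mul, mul_zero, add_zero, zero_add, mul_one, neg_neg]
        linear_combination -hC2
      · simp only [hp, reduceIte]
        simp only [one_mul, star_mul', star_one, star_neg, Complex.star_def, Complex.conj_I, Complex.conj_ofReal, Complex.ofReal_zero, Complex.ofReal_one, Complex.ofReal_neg, Complex.ofReal_mul, mul_zero, add_zero, zero_add, mul_one, neg_neg]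
        linear_combination -hC2 + ((Real.cosh (u/2) : ℂ) * (Real.cosh (u/2) : ℂ)
          + (Real.sinh (u/2) : ℂ) * (Real.sinh (u/2) : ℂ)) * Complex.I_sq
    · -- k = i + 1, i even
      have hne : ¬ i = k := by intro h; subst h; omega
      have hk1 : ¬ (k : ℕ) % 2 = 0 := by omega
      rw [if_neg hne, if_neg (show ¬((i:ℕ) = (k:ℕ)+1 ∧ (i:ℕ) % 2 = 1) by omega),
        if_pos (show ((k:ℕ) = (i:ℕ)+1 ∧ (k:ℕ) % 2 = 1) by omega)]
      simp only [hp, hk1, reduceIte]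
      simp only [one_mul, star_mul', star_one, star_neg, Complex.star_def, Complex.conj_I, Complex.conj_ofReal, Complex.ofReal_zero, Complex.ofReal_one, Complex.ofReal_neg, Complex.ofReal_mul, mul_zero, add_zero, zero_add, mul_one, neg_neg]
      linear_combination Complex.I * hS2
    · -- i = k + 1, k even
      have hne : ¬ i = k := by intro h; subst h; omega
      have hi1 : ¬ (i : ℕ) % 2 = 0 := by omega
      rw [if_neg hne, if_pos (show ((i:ℕ) = (k:ℕ)+1 ∧ (i:ℕ) % 2 = 1) by omega)]
      simp only [hp, hi1, reduceIte]
      simp only [one_mul, star_mul', star_one, star_neg, Complex.star_def, Complex.conj_I, Complex.conj_ofReal, Complex.ofReal_zero, Complex.ofReal_one, Complex.ofReal_neg, Complex.ofReal_mul, mul_zero, add_zero, zero_add, mul_one, neg_neg]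
      linear_combination -Complex.I * hS2
  · have hne : ¬ i = k := by intro h; subst h; omega
    have hcond : ¬ 2 * ((i:ℕ)/2) = 2 * ((k:ℕ)/2) := by omega
    rw [if_neg hcond, if_neg hcond, if_neg hne,
      if_neg (show ¬((i:ℕ) = (k:ℕ)+1 ∧ (i:ℕ) % 2 = 1) by omega),
      if_neg (show ¬((k:ℕ) = (i:ℕ)+1 ∧ (k:ℕ) % 2 = 1) by omega)]
    simp

lemma L2 (n : ℕ) (t : Fin n → ℝ) :
    (smat t).map Complex.ofReal
      = Umat n t * (Vmat n t)ᴴ + Vmat n t * (Umat n t)ᴴ := by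
  ext i k
  have hb : 2 * ((i : ℕ) / 2) < 2 * n := by have := i.isLt; omega
  simp only [Matrix.add_apply, Matrix.mul_apply, Matrix.conjTranspose_apply, Matrix.map_apply,
    Umat, Vmat, Matrix.of_apply, apply_ite (star : ℂ → ℂ), star_zero]
  rw [sum_if_mul _ _ hb, sum_if_mul _ _ hb]
  simp only [smat, Matrix.diagonal_apply]
  by_cases him : (i : ℕ) / 2 = (k : ℕ) / 2
  · have hC : (⟨(k : ℕ)/2, by have := k.isLt; omega⟩ : Fin n)
        = ⟨(i : ℕ)/2, by have := i.isLt; omega⟩ := Fin.ext him.symm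
    rw [hC]
    have hcond : 2 * ((i:ℕ)/2) = 2 * ((k:ℕ)/2) := by omega
    rw [if_pos hcond, if_pos hcond]
    set u := t ⟨(i : ℕ)/2, by have := i.isLt; omega⟩ with hu
    have hSh : (Real.cosh (u/2) : ℂ) * (Real.sinh (u/2) : ℂ)
        + (Real.sinh (u/2) : ℂ) * (Real.cosh (u/2) : ℂ) = ((Real.sinh u : ℝ) : ℂ) := by
      rw [← Complex.ofReal_mul, ← Complex.ofReal_mul, ← Complex.ofReal_add, sinh_half]
    rcases (by omega : (i : ℕ) = (k : ℕ) ∨ ((i:ℕ) % 2 = 0 ∧ (k:ℕ) = (i:ℕ)+1)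
        ∨ ((k:ℕ) % 2 = 0 ∧ (i:ℕ) = (k:ℕ)+1)) with hik | ⟨hp, hik⟩ | ⟨hp, hik⟩
    · have hik' : i = k := Fin.ext hik
      subst hik'
      rw [if_pos rfl]
      by_cases hp : (i : ℕ) % 2 = 0
      · simp only [hp, reduceIte]
        simp only [one_mul, star_mul', star_one, star_neg, Complex.star_def, Complex.conj_I, Complex.conj_ofReal, Complex.ofReal_zero, Complex.ofReal_one, Complex.ofReal_neg, Complex.ofReal_mul, mul_zero, add_zero, zero_add, mul_one, neg_neg]
        linear_combination -hSh
      · simp only [hp, reduceIte]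
        simp only [one_mul, star_mul', star_one, star_neg, Complex.star_def, Complex.conj_I, Complex.conj_ofReal, Complex.ofReal_zero, Complex.ofReal_one, Complex.ofReal_neg, Complex.ofReal_mul, mul_zero, add_zero, zero_add, mul_one, neg_neg]
        linear_combination hSh - ((Real.cosh (u/2) : ℂ) * (Real.sinh (u/2) : ℂ)
          + (Real.sinh (u/2) : ℂ) * (Real.cosh (u/2) : ℂ)) * Complex.I_sq
    · have hne : ¬ i = k := by intro h; subst h; omega
      have hk1 : ¬ (k : ℕ) % 2 = 0 := by omega
      rw [if_neg hne]
      simp only [hp, hk1, reduceIte]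
      simp only [one_mul, star_mul', star_one, star_neg, Complex.star_def, Complex.conj_I, Complex.conj_ofReal, Complex.ofReal_zero, Complex.ofReal_one, Complex.ofReal_neg, Complex.ofReal_mul, mul_zero, add_zero, zero_add, mul_one, neg_neg]
      ring
    · have hne : ¬ i = k := by intro h; subst h; omega
      have hi1 : ¬ (i : ℕ) % 2 = 0 := by omega
      rw [if_neg hne]
      simp only [hp, hi1, reduceIte]
      simp only [one_mul, star_mul', star_one, star_neg, Complex.star_def, Complex.conj_I, Complex.conj_ofReal, Complex.ofReal_zero, Complex.ofReal_one, Complex.ofReal_neg, Complex.ofReal_mul, mul_zero, add_zero, zero_add, mul_one, neg_neg]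
      ring
  · have hne : ¬ i = k := by intro h; subst h; omega
    have hcond : ¬ 2 * ((i:ℕ)/2) = 2 * ((k:ℕ)/2) := by omega
    rw [if_neg hcond, if_neg hcond, if_neg hne]
    simp

-- helpers
lemma lcl {n : ℕ} (t : Fin n → ℝ) : lambdaBar n * cmat t * lambdaBar n = cmat t := by
  simp only [lambdaBar, cmat, Matrix.diagonal_mul_diagonal]
  refine congrArg Matrix.diagonal (funext fun i => ?_)
  by_cases hi : i.val % 2 = 0 <;> simp [hi, Pi.mul_apply]

lemma sL {n : ℕ} (t : Fin n → ℝ) : smat t * lambdaBar n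
    = Matrix.diagonal (fun i : Fin (2*n) => Real.sinh (t ⟨i.val/2, by have := i.isLt; omega⟩)) := by
  simp only [smat, lambdaBar, Matrix.diagonal_mul_diagonal]
  refine congrArg Matrix.diagonal (funext fun i => ?_)
  by_cases hi : i.val % 2 = 0 <;> simp [hi, Pi.mul_apply]


/-- **Sufficiency of strict entrywise domination for GLOCC pure-state transformations.**
If `r_k > r'_k ≥ 0` for all `k`, then the Gaussian operation whose CM `Γ` is a product of
two-mode squeezed states with parameters `r''_k` given by
`cosh r''_k = (cosh r_k cosh r'_k - 1)/(cosh r_k - cosh r'_k)` is a valid Gaussian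
operation (`Γ + iσ_{2n} ≥ 0`) and transforms the state with CM
`[[c(r),s(r)],[s(r),c(r)]]` into the one with blocks `c(r'), s(r')`, without any
symplectic correction on the `B` side. -/
theorem glocc_sufficiency (n : ℕ) (hn : 1 ≤ n) (r r' r'' : Fin n → ℝ)
    (hrr' : ∀ k, r' k < r k) (hr'0 : ∀ k, 0 ≤ r' k)
    (hr''0 : ∀ k, 0 ≤ r'' k)
    (hr'' : ∀ k, Real.cosh (r'' k) =
      (Real.cosh (r k) * Real.cosh (r' k) - 1) / (Real.cosh (r k) - Real.cosh (r' k)))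
    (Γ Γt : Matrix (Fin (2 * n) ⊕ Fin (2 * n)) (Fin (2 * n) ⊕ Fin (2 * n)) ℝ)
    (hΓ : Γ = Matrix.fromBlocks (cmat r'') (smat r'') (smat r'') (cmat r''))
    (hΓt : Γt = (Matrix.fromBlocks 1 0 0 (lambdaBar n)) * Γ *
      (Matrix.fromBlocks 1 0 0 (lambdaBar n))) :
    Matrix.PosSemidef (Γ.map Complex.ofReal + Complex.I • (sympBig n).map Complex.ofReal) ∧
    Γt.toBlocks₂₂ + cmat r = cmat r'' + cmat r ∧
    IsUnit (Γt.toBlocks₂₂ + cmat r) ∧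
    Γ.toBlocks₁₁ - Γt.toBlocks₁₂ * (Γt.toBlocks₂₂ + cmat r)⁻¹ * (Γt.toBlocks₁₂)ᵀ = cmat r' ∧
    cmat r - smat r * (Γt.toBlocks₂₂ + cmat r)⁻¹ * smat r = cmat r' ∧
    Γt.toBlocks₁₂ * (Γt.toBlocks₂₂ + cmat r)⁻¹ * smat r = smat r' := by
  have hdec : Γ.map Complex.ofReal + Complex.I • (sympBig n).map Complex.ofReal
      = (Matrix.fromBlocks (Umat n r'') (Vmat n r'') (Vmat n r'') (Umat n r''))
        * (Matrix.fromBlocks (Umat n r'') (Vmat n r'') (Vmat n r'') (Umat n r''))ᴴ := by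
    rw [hΓ, sympBig, Matrix.fromBlocks_conjTranspose, Matrix.fromBlocks_multiply,
      Matrix.fromBlocks_map, Matrix.fromBlocks_map, Matrix.fromBlocks_smul,
      Matrix.fromBlocks_add]
    rw [Matrix.map_zero _ Complex.ofReal_zero, smul_zero, add_zero, L1, L2,
      add_comm (Vmat n r'' * (Umat n r'')ᴴ) (Umat n r'' * (Vmat n r'')ᴴ),
      add_comm (Vmat n r'' * (Vmat n r'')ᴴ) (Umat n r'' * (Umat n r'')ᴴ)]
  refine ⟨by rw [hdec]; exact Matrix.posSemidef_self_mul_conjTranspose _, ?_⟩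
  clear hdec
  have hfb : Γt = Matrix.fromBlocks (cmat r'') (smat r'' * lambdaBar n)
      (lambdaBar n * smat r'') (lambdaBar n * cmat r'' * lambdaBar n) := by
    rw [hΓt, hΓ]
    simp [Matrix.fromBlocks_multiply, Matrix.mul_assoc]
  have h22 : Γt.toBlocks₂₂ = cmat r'' := by
    rw [hfb, Matrix.toBlocks_fromBlocks₂₂, lcl]
  have h12 : Γt.toBlocks₁₂
      = Matrix.diagonal (fun i : Fin (2*n) => Real.sinh (r'' ⟨i.val/2, by have := i.isLt; omega⟩)) := by
    rw [hfb, Matrix.toBlocks_fromBlocks₁₂, sL]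
  have h11 : Γ.toBlocks₁₁ = cmat r'' := by rw [hΓ, Matrix.toBlocks_fromBlocks₁₁]
  -- the denominator diagonal
  have hsum : Γt.toBlocks₂₂ + cmat r = Matrix.diagonal
      (fun i : Fin (2*n) => Real.cosh (r'' ⟨i.val/2, by have := i.isLt; omega⟩)
        + Real.cosh (r ⟨i.val/2, by have := i.isLt; omega⟩)) := by
    rw [h22]; simp only [cmat, Matrix.diagonal_add]
  have hdpos : ∀ i : Fin (2*n),
      0 < Real.cosh (r'' ⟨i.val/2, by have := i.isLt; omega⟩)
        + Real.cosh (r ⟨i.val/2, by have := i.isLt; omega⟩) := by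
    intro i; have := Real.cosh_pos (x := r'' ⟨i.val/2, by have := i.isLt; omega⟩)
    have := Real.cosh_pos (x := r ⟨i.val/2, by have := i.isLt; omega⟩); linarith
  have hinv : (Γt.toBlocks₂₂ + cmat r)⁻¹ = Matrix.diagonal
      (fun i : Fin (2*n) => (Real.cosh (r'' ⟨i.val/2, by have := i.isLt; omega⟩)
        + Real.cosh (r ⟨i.val/2, by have := i.isLt; omega⟩))⁻¹) := by
    refine Matrix.inv_eq_right_inv ?_
    rw [hsum, Matrix.diagonal_mul_diagonal, ← Matrix.diagonal_one]
    refine congrArg Matrix.diagonal (funext fun i => ?_)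
    exact mul_inv_cancel₀ (hdpos i).ne'
  have hunit : IsUnit (Γt.toBlocks₂₂ + cmat r) := by
    rw [hsum, Matrix.isUnit_iff_isUnit_det, Matrix.det_diagonal]
    rw [isUnit_iff_ne_zero]
    exact Finset.prod_ne_zero_iff.2 fun i _ => (hdpos i).ne'
  -- scalar key facts
  have hkey := fun k => scalar_key (r k) (r' k) (r'' k) (hr'0 k) (hrr' k) (hr''0 k) (hr'' k)
  refine ⟨by rw [h22], hunit, ?_, ?_, ?_⟩
  · rw [h11, h12, hinv, Matrix.diagonal_transpose, cmat, cmat,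
      Matrix.diagonal_mul_diagonal, Matrix.diagonal_mul_diagonal, Matrix.diagonal_sub]
    refine congrArg Matrix.diagonal (funext fun i => ?_)
    try simp only [Pi.mul_apply, Pi.sub_apply]
    exact (hkey ⟨i.val/2, by have := i.isLt; omega⟩).1
  · rw [hinv, smat, cmat, cmat,
      Matrix.diagonal_mul_diagonal, Matrix.diagonal_mul_diagonal, Matrix.diagonal_sub]
    refine congrArg Matrix.diagonal (funext fun i => ?_)
    have := (hkey ⟨i.val/2, by have := i.isLt; omega⟩).2.1
    try simp only [Pi.mul_apply, Pi.sub_apply]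
    by_cases hi : i.val % 2 = 0 <;> simp only [hi, if_true, if_false] <;>
      linear_combination this
  · rw [h12, hinv, smat,
      Matrix.diagonal_mul_diagonal, Matrix.diagonal_mul_diagonal]
    rw [smat]
    refine congrArg Matrix.diagonal (funext fun i => ?_)
    have := (hkey ⟨i.val/2, by have := i.isLt; omega⟩).2.2
    try simp only [Pi.mul_apply]
    by_cases hi : i.val % 2 = 0 <;> simp only [hi, if_true, if_false]
    · linear_combination this
    · linear_combination -this
end

section
/- Let M₁ and M₂ be real symmetric positive definite 2n×2n matrices with M₁ − M₂ positive semidefinite. Then for every k = 1, …, 2n, the k-th smallest eigenvalue of the real symmetric positive definite matrix −√M₁ · σ_n · M₁ · σ_n · √M₁ is greater than or equal to the k-th smallest eigenvalue of −√M₂ · σ_n · M₂ · σ_n · √M₂. Equivalently, the ascendingly ordered symplectic eigenvalues of M₁ dominate entrywise those of M₂. -/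
open Matrix

open scoped ComplexOrder in
/-- The positive semidefinite square root of a positive semidefinite matrix (the definition
`Matrix.PosSemidef.sqrt` of Mathlib, Dec 2024, since removed from Mathlib). -/
noncomputable def Matrix.PosSemidef.sqrt {n : Type*} {𝕜 : Type*} [Fintype n] [RCLike 𝕜]
    [DecidableEq n] {A : Matrix n n 𝕜} (hA : A.PosSemidef) : Matrix n n 𝕜 :=
  hA.1.eigenvectorUnitary.1 * diagonal ((↑) ∘ (√·) ∘ hA.1.eigenvalues) *
  (star hA.1.eigenvectorUnitary : Matrix n n 𝕜)

/-- The ascendingly ordered eigenvalues of a Hermitian real matrix. -/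
noncomputable def sortedEigs {m : ℕ} (A : Matrix (Fin m) (Fin m) ℝ) (hA : A.IsHermitian) :
    Fin m → ℝ := hA.eigenvalues ∘ Tuple.sort hA.eigenvalues

/-!
Write `A(M) = √M (σᵀ M σ) √M`, which is the matrix `-√M σ M σ √M` since `σᵀ = -σ`, and put
`K = σᵀ M₂ σ`, `T = √K`. As `XY` and `YX` have the same characteristic polynomial,
`A(M₂) = (√M₂ T)(T √M₂)` has the spectrum of `T M₂ T`, and `T M₁ T = (T √M₁)(√M₁ T)` has the
spectrum of `√M₁ K √M₁`. Congruence preserves the Loewner order, so `M₂ ≤ M₁` gives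
`T M₂ T ≤ T M₁ T` and `√M₁ K √M₁ ≤ A(M₁)`. By Weyl's monotonicity theorem (ordered eigenvalues
are monotone in the Loewner order; a dimension count produces a common vector of the span of the
top `m - k` eigenvectors of one matrix and the bottom `k + 1` of the other), the ordered spectra
satisfy `λ(A(M₂)) = λ(T M₂ T) ≤ λ(T M₁ T) = λ(√M₁ K √M₁) ≤ λ(A(M₁))`.
-/

open scoped MatrixOrder RealInnerProductSpace

namespace Matrix

lemma charpoly_mul_mul_eq_of_mul_self {ι R : Type*} [Fintype ι] [DecidableEq ι] [CommRing R]
    {P Q K M : Matrix ι ι R} (hP : P * P = M) (hQ : Q * Q = K) :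
    (P * K * P).charpoly = (Q * M * Q).charpoly := by
  rw [← hP, ← hQ, ← mul_assoc, mul_assoc (P * Q), charpoly_mul_comm]
  simp only [mul_assoc]

variable {ι : Type*} [Fintype ι] [DecidableEq ι] {A : Matrix ι ι ℝ}

lemma PosSemidef.sqrt_eq_cfcSqrt (hA : A.PosSemidef) : hA.sqrt = CFC.sqrt A := by
  rw [CFC.sqrt_eq_real_sqrt A hA.nonneg, cfcₙ_eq_cfc, hA.1.cfc_eq, IsHermitian.cfc,
    Unitary.conjStarAlgAut_apply]
  rfl

lemma PosSemidef.sqrt_mul_self (hA : A.PosSemidef) : hA.sqrt * hA.sqrt = A := by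
  rw [hA.sqrt_eq_cfcSqrt, CFC.sqrt_mul_sqrt_self A hA.nonneg]

lemma PosSemidef.isHermitian_sqrt (hA : A.PosSemidef) : hA.sqrt.IsHermitian := by
  rw [hA.sqrt_eq_cfcSqrt]
  exact (CFC.sqrt_nonneg A).posSemidef.isHermitian

lemma IsHermitian.inner_toEuclideanLin_sub_eq_sum_of_mem_span (hA : A.IsHermitian) (c : ℝ)
    {s : Finset ι} {x : EuclideanSpace ℝ ι}
    (hx : x ∈ Submodule.span ℝ (hA.eigenvectorBasis '' s)) :
    ⟪x, toEuclideanLin A x⟫ - c * ⟪x, x⟫ =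
      ∑ i ∈ s, (hA.eigenvalues i - c) * hA.eigenvectorBasis.repr x i ^ 2 := by
  set b := hA.eigenvectorBasis
  have hAb (i : ι) : toEuclideanLin A (b i) = hA.eigenvalues i • b i := by
    ext j
    simpa [toLpLin_apply] using congrFun (hA.mulVec_eigenvectorBasis i) j
  have hsymm := isSymmetric_toEuclideanLin_iff.mpr hA
  have hsupp : ∀ i ∉ s, b.repr x i = 0 := fun i hi => by
    simpa using mt (b.toBasis.repr_support_subset_of_mem_span _ hx ·) hi
  have hterm (i : ι) : ⟪x, b i⟫ * ⟪b i, toEuclideanLin A x⟫ - c * (⟪x, b i⟫ * ⟪b i, x⟫) =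
      (hA.eigenvalues i - c) * b.repr x i ^ 2 := by
    rw [← hsymm, hAb, real_inner_smul_left, real_inner_comm (b i) x, b.repr_apply_apply]
    ring
  rw [← b.sum_inner_mul_inner x x, ← b.sum_inner_mul_inner x, Finset.mul_sum,
    ← Finset.sum_sub_distrib, Fintype.sum_congr _ _ hterm]
  exact (Finset.sum_subset s.subset_univ fun i _ hi => by simp [hsupp i hi]).symm

end Matrix

lemma LinearIndependent.finrank_span_image_finset {ι K V : Type*} [DivisionRing K]
    [AddCommGroup V] [Module K V] {b : ι → V} (hb : LinearIndependent K b) (s : Finset ι) :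
    Module.finrank K (Submodule.span K (b '' s)) = s.card := by
  rw [Set.image_eq_range]
  exact (finrank_span_eq_card (hb.comp ((↑) : s → ι) Subtype.val_injective)).trans (by simp)

lemma Submodule.exists_ne_zero_mem_of_finrank_lt_add {K V : Type*} [DivisionRing K]
    [AddCommGroup V] [Module K V] [FiniteDimensional K V] {s t : Submodule K V}
    (h : Module.finrank K V < Module.finrank K s + Module.finrank K t) :
    ∃ x ∈ s, x ∈ t ∧ x ≠ 0 := by
  by_contra! hst
  exact h.not_ge (Submodule.finrank_add_finrank_le_of_disjoint
    (Submodule.disjoint_def.2 fun x hs ht => hst x hs ht))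

variable {m : ℕ}

lemma sortedEigs_eq_of_charpoly_eq {A B : Matrix (Fin m) (Fin m) ℝ} (hA : A.IsHermitian)
    (hB : B.IsHermitian) (h : A.charpoly = B.charpoly) : sortedEigs A hA = sortedEigs B hB := by
  rw [sortedEigs, sortedEigs, (hA.eigenvalues_eq_eigenvalues_iff hB).2 h]

lemma sortedEigs_mono {A B : Matrix (Fin m) (Fin m) ℝ} (hA : A.IsHermitian) (hB : B.IsHermitian)
    (hAB : A ≤ B) (k : Fin m) : sortedEigs A hA k ≤ sortedEigs B hB k := by
  set σA := Tuple.sort hA.eigenvalues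
  set σB := Tuple.sort hB.eigenvalues
  set sA : Finset (Fin m) := (Finset.Ici k).map σA.toEmbedding
  set sB : Finset (Fin m) := (Finset.Iic k).map σB.toEmbedding
  obtain ⟨x, hxA, hxB, hx⟩ := Submodule.exists_ne_zero_mem_of_finrank_lt_add
    (s := Submodule.span ℝ (hA.eigenvectorBasis '' sA))
    (t := Submodule.span ℝ (hB.eigenvectorBasis '' sB)) (by
      rw [hA.eigenvectorBasis.orthonormal.linearIndependent.finrank_span_image_finset,
        hB.eigenvectorBasis.orthonormal.linearIndependent.finrank_span_image_finset]
      simp only [finrank_euclideanSpace_fin, sA, sB, Finset.card_map, Fin.card_Ici, Fin.card_Iic]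
      omega)
  have hA_ge : 0 ≤ ⟪x, toEuclideanLin A x⟫ - sortedEigs A hA k * ⟪x, x⟫ := by
    rw [hA.inner_toEuclideanLin_sub_eq_sum_of_mem_span _ hxA]
    refine Finset.sum_nonneg fun i hi => mul_nonneg (sub_nonneg.2 ?_) (sq_nonneg _)
    obtain ⟨j, hj, rfl⟩ := Finset.mem_map.1 hi
    exact Tuple.monotone_sort hA.eigenvalues (Finset.mem_Ici.1 hj)
  have hB_le : ⟪x, toEuclideanLin B x⟫ - sortedEigs B hB k * ⟪x, x⟫ ≤ 0 := by
    rw [hB.inner_toEuclideanLin_sub_eq_sum_of_mem_span _ hxB]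
    refine Finset.sum_nonpos fun i hi =>
      mul_nonpos_of_nonpos_of_nonneg (sub_nonpos.2 ?_) (sq_nonneg _)
    obtain ⟨j, hj, rfl⟩ := Finset.mem_map.1 hi
    exact Tuple.monotone_sort hB.eigenvalues (Finset.mem_Iic.1 hj)
  have hAB_x : ⟪x, toEuclideanLin A x⟫ ≤ ⟪x, toEuclideanLin B x⟫ := by
    have := (Matrix.isPositive_toEuclideanLin_iff.2 hAB).inner_nonneg_right x
    rwa [map_sub, LinearMap.sub_apply, inner_sub_right, sub_nonneg] at this
  have hx_pos : 0 < ⟪x, x⟫ := real_inner_self_pos.2 hx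
  nlinarith

lemma sortedEigs_sqrt_mul_transpose_mul_mul_sqrt_mono {M₁ M₂ : Matrix (Fin m) (Fin m) ℝ}
    (S : Matrix (Fin m) (Fin m) ℝ) (h₁ : M₁.PosSemidef) (h₂ : M₂.PosSemidef) (h₁₂ : M₂ ≤ M₁)
    (hA₁ : (h₁.sqrt * (Sᵀ * M₁ * S) * h₁.sqrt).IsHermitian)
    (hA₂ : (h₂.sqrt * (Sᵀ * M₂ * S) * h₂.sqrt).IsHermitian) (k : Fin m) :
    sortedEigs _ hA₂ k ≤ sortedEigs _ hA₁ k := by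
  have hK : Sᵀ * M₂ * S ≤ Sᵀ * M₁ * S := star_left_conjugate_le_conjugate h₁₂ S
  have hK₂ : (Sᵀ * M₂ * S).PosSemidef := h₂.conjTranspose_mul_mul_same S
  set T := hK₂.sqrt
  have hT : T.IsHermitian := hK₂.isHermitian_sqrt
  have hR₁ : h₁.sqrt.IsHermitian := h₁.isHermitian_sqrt
  calc sortedEigs _ hA₂ k
      = sortedEigs (T * M₂ * T) (h₂.1.isSelfAdjoint.conjugate_self hT.isSelfAdjoint) k :=
        congrFun (sortedEigs_eq_of_charpoly_eq _ _
          (charpoly_mul_mul_eq_of_mul_self h₂.sqrt_mul_self hK₂.sqrt_mul_self)) k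
    _ ≤ sortedEigs (T * M₁ * T) (h₁.1.isSelfAdjoint.conjugate_self hT.isSelfAdjoint) k :=
        sortedEigs_mono _ _ (hT.isSelfAdjoint.conjugate_le_conjugate h₁₂) k
    _ = sortedEigs (h₁.sqrt * (Sᵀ * M₂ * S) * h₁.sqrt)
          (hK₂.1.isSelfAdjoint.conjugate_self hR₁.isSelfAdjoint) k :=
        congrFun (sortedEigs_eq_of_charpoly_eq _ _
          (charpoly_mul_mul_eq_of_mul_self hK₂.sqrt_mul_self h₁.sqrt_mul_self)) k
    _ ≤ sortedEigs _ hA₁ k := sortedEigs_mono _ _ (hR₁.isSelfAdjoint.conjugate_le_conjugate hK) k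

lemma symp_transpose (n : ℕ) : (symp n)ᵀ = -symp n := by
  ext i j
  simp only [symp, transpose_apply, Matrix.neg_apply, of_apply]
  split_ifs <;> first | omega | norm_num

lemma neg_mul_symp_mul_mul_symp_mul (n : ℕ) (R M : Matrix (Fin (2 * n)) (Fin (2 * n)) ℝ) :
    -(R * symp n * M * symp n * R) = R * ((symp n)ᵀ * M * symp n) * R := by
  simp only [symp_transpose, Matrix.neg_mul, Matrix.mul_neg, Matrix.mul_assoc]

/-- **Monotonicity of the symplectic spectrum (Lemma 2).** If `M₁ ≥ M₂ > 0`, then for each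
`k` the `k`-th smallest eigenvalue of `-√M₁·σ·M₁·σ·√M₁` dominates that of
`-√M₂·σ·M₂·σ·√M₂`; equivalently the ordered symplectic eigenvalues of `M₁` dominate those
of `M₂` entrywise. -/
theorem symplectic_spectrum_monotone (n : ℕ)
    (M₁ M₂ : Matrix (Fin (2 * n)) (Fin (2 * n)) ℝ)
    (h₁ : M₁.PosDef) (h₂ : M₂.PosDef) (h₁₂ : (M₁ - M₂).PosSemidef)
    (hH₁ : (-(h₁.posSemidef.sqrt * symp n * M₁ * symp n * h₁.posSemidef.sqrt)).IsHermitian)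
    (hH₂ : (-(h₂.posSemidef.sqrt * symp n * M₂ * symp n * h₂.posSemidef.sqrt)).IsHermitian) :
    ∀ k, sortedEigs _ hH₂ k ≤ sortedEigs _ hH₁ k := by
  intro k
  have e₁ := neg_mul_symp_mul_mul_symp_mul n h₁.posSemidef.sqrt M₁
  have e₂ := neg_mul_symp_mul_mul_symp_mul n h₂.posSemidef.sqrt M₂
  rw [sortedEigs_eq_of_charpoly_eq hH₁ (e₁ ▸ hH₁) (congrArg charpoly e₁),
    sortedEigs_eq_of_charpoly_eq hH₂ (e₂ ▸ hH₂) (congrArg charpoly e₂)]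
  exact sortedEigs_sqrt_mul_transpose_mul_mul_sqrt_mono _ h₁.posSemidef h₂.posSemidef h₁₂ _ _ k
end

section
/- Let n ≥ 1, let r, r' ∈ ℝⁿ with r₁ ≥ … ≥ r_n ≥ 0 and r'₁ ≥ … ≥ r'_n ≥ 0, and let S be a real symplectic 2n×2n matrix (S σ_n Sᵀ = σ_n). If Sᵀ · c(r) · S − c(r') is positive semidefinite, then r_k ≥ r'_k for every k = 1, …, n. -/
open Matrix

/-!
In the basis where `σ_n` becomes `J` and `c(r)` becomes `diag(cosh r, cosh r)`, put
`a_j(w) = w_j - i w_{n+j}` and `b_j(w) = w_j + i w_{n+j}` for `w ∈ ℂ^{2n}`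
(`modeMinus`, `modePlus`). Then `2 wᴴ c(r) w = ∑ cosh r_j (|a_j w|² + |b_j w|²)`, while
`Ω(w) = ∑ (|a_j w|² - |b_j w|²)` is a multiple of the symplectic form evaluated on
`Re w, Im w`, hence `Ω(S w) = Ω(w)`.
Fix `k`. Counting `2n - 1` complex linear conditions gives `x ≠ 0` with `b_j(Sx) = 0` for all `j`,
`a_j(Sx) = 0` for `j < k` and `a_j(x) = 0` for `j > k`. For this `x`, the ordering of `r, r'` and
the domination hypothesis give, as in the Courant–Fischer min-max argument,
`cosh r'_k · Ω(x) ≤ 2 xᴴ c(r') x ≤ 2 (Sx)ᴴ c(r) (Sx) ≤ cosh r_k · Ω(Sx)`, and `Ω(Sx) > 0`.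
-/

open Complex

theorem le_of_weighted_mode_sums {l : Type*} [Fintype l] [LinearOrder l]
    {c c' p q p' : l → ℝ} {k : l} (hc : Antitone c) (hc' : Antitone c') (hc'_pos : ∀ j, 0 < c' j)
    (hp : ∀ j, 0 ≤ p j) (hq : ∀ j, 0 ≤ q j) (hp' : ∀ j, 0 ≤ p' j) (hpq : ∃ j, 0 < p j + q j)
    (hp_gt : ∀ j, k < j → p j = 0) (hp'_lt : ∀ j, j < k → p' j = 0)
    (hbal : ∑ j, (p j - q j) = ∑ j, p' j)
    (hdom : ∑ j, c' j * (p j + q j) ≤ ∑ j, c j * p' j) :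
    c' k ≤ c k := by
  have lower : c' k * ∑ j, p' j ≤ ∑ j, c' j * (p j + q j) := by
    rw [← hbal, Finset.mul_sum]
    refine Finset.sum_le_sum fun j _ => ?_
    rcases le_or_gt j k with hjk | hkj
    · nlinarith [hc' hjk, hc'_pos k, hp j, hq j]
    · nlinarith [hp_gt j hkj, hc'_pos k, hc'_pos j, hq j]
  have upper : ∑ j, c j * p' j ≤ c k * ∑ j, p' j := by
    rw [Finset.mul_sum]
    refine Finset.sum_le_sum fun j _ => ?_
    rcases lt_or_ge j k with hjk | hkj
    · simp [hp'_lt j hjk]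
    · exact mul_le_mul_of_nonneg_right (hc hkj) (hp' j)
  have energy_pos : 0 < ∑ j, c' j * (p j + q j) := by
    obtain ⟨j, hj⟩ := hpq
    exact Finset.sum_pos' (fun j _ => mul_nonneg (hc'_pos j).le (add_nonneg (hp j) (hq j)))
      ⟨j, Finset.mem_univ _, mul_pos (hc'_pos j) hj⟩
  have balance_pos : 0 < ∑ j, p' j := by
    refine lt_of_le_of_ne (Finset.sum_nonneg fun j _ => hp' j) fun h => ?_
    rw [← h, mul_zero] at upper
    linarith
  exact le_of_mul_le_mul_right (by linarith) balance_pos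

theorem exists_ne_zero_forall_apply_eq_zero {K V ι : Type*} [Field K] [AddCommGroup V]
    [Module K V] [FiniteDimensional K V] [Fintype ι] (f : ι → V →ₗ[K] K)
    (h : Fintype.card ι < Module.finrank K V) : ∃ x ≠ 0, ∀ i, f i x = 0 := by
  have hker := LinearMap.ker_ne_bot_of_finrank_lt (f := LinearMap.pi f)
    (by rwa [Module.finrank_fintype_fun_eq_card])
  obtain ⟨x, hx, hx0⟩ := (Submodule.ne_bot_iff _).mp hker
  exact ⟨x, hx0, fun i => congrFun (LinearMap.mem_ker.mp hx) i⟩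

section Modes

variable {l : Type*}

noncomputable def modeMinus (j : l) : (l ⊕ l → ℂ) →ₗ[ℂ] ℂ :=
  LinearMap.proj (Sum.inl j) - I • LinearMap.proj (Sum.inr j)

noncomputable def modePlus (j : l) : (l ⊕ l → ℂ) →ₗ[ℂ] ℂ :=
  LinearMap.proj (Sum.inl j) + I • LinearMap.proj (Sum.inr j)

@[simp] lemma modeMinus_apply (j : l) (w : l ⊕ l → ℂ) :
    modeMinus j w = w (Sum.inl j) - I * w (Sum.inr j) := rfl

@[simp] lemma modePlus_apply (j : l) (w : l ⊕ l → ℂ) :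
    modePlus j w = w (Sum.inl j) + I * w (Sum.inr j) := rfl

lemma normSq_modeMinus_add_normSq_modePlus (j : l) (w : l ⊕ l → ℂ) :
    normSq (modeMinus j w) + normSq (modePlus j w) =
      2 * (normSq (w (Sum.inl j)) + normSq (w (Sum.inr j))) := by
  simp only [modeMinus_apply, modePlus_apply, normSq_apply, sub_re, sub_im, add_re, add_im,
    mul_re, mul_im, I_re, I_im]
  ring

variable [Fintype l]

lemma sum_mul_normSq_modeMinus_add_normSq_modePlus (c : l → ℝ) (w : l ⊕ l → ℂ) :
    ∑ j, c j * (normSq (modeMinus j w) + normSq (modePlus j w)) =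
      2 * ∑ i, Sum.elim c c i * normSq (w i) := by
  simp only [normSq_modeMinus_add_normSq_modePlus, Fintype.sum_sum_type, Sum.elim_inl,
    Sum.elim_inr, Finset.mul_sum, ← Finset.sum_add_distrib]
  exact Finset.sum_congr rfl fun j _ => by ring

lemma sum_normSq_modeMinus_sub_normSq_modePlus [DecidableEq l] (w : l ⊕ l → ℂ) :
    ∑ j, (normSq (modeMinus j w) - normSq (modePlus j w)) =
      -4 * ((fun i => (w i).re) ⬝ᵥ (J l ℝ *ᵥ fun i => (w i).im)) := by
  simp only [dotProduct, Fintype.sum_sum_type, J, fromBlocks_mulVec]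
  simp only [Matrix.neg_mulVec, Matrix.one_mulVec, Matrix.zero_mulVec, zero_add, add_zero,
    Sum.elim_inl, Sum.elim_inr, Finset.mul_sum, ← Finset.sum_add_distrib]
  refine Finset.sum_congr rfl fun j _ => ?_
  simp only [modeMinus_apply, modePlus_apply, normSq_apply, sub_re, sub_im, add_re, add_im,
    mul_re, mul_im, I_re, I_im, Pi.neg_apply, Function.comp_apply]
  ring

end Modes

section RealMatrix

variable {ι : Type*} [Fintype ι]

lemma re_map_ofReal_mulVec (A : Matrix ι ι ℝ) (x : ι → ℂ) (i : ι) :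
    ((A.map ofReal *ᵥ x) i).re = (A *ᵥ fun j => (x j).re) i := by
  simp only [mulVec, dotProduct, re_sum, map_apply, re_ofReal_mul]

lemma im_map_ofReal_mulVec (A : Matrix ι ι ℝ) (x : ι → ℂ) (i : ι) :
    ((A.map ofReal *ᵥ x) i).im = (A *ᵥ fun j => (x j).im) i := by
  simp only [mulVec, dotProduct, im_sum, map_apply, im_ofReal_mul]

lemma dotProduct_mulVec_mulVec_of_transpose_mul_mul {A M : Matrix ι ι ℝ} (h : Aᵀ * M * A = M)
    (u v : ι → ℝ) : (A *ᵥ u) ⬝ᵥ (M *ᵥ (A *ᵥ v)) = u ⬝ᵥ (M *ᵥ v) := by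
  rw [dotProduct_mulVec, ← vecMul_transpose, vecMul_vecMul, ← dotProduct_mulVec, mulVec_mulVec, h]

variable [DecidableEq ι]

lemma sum_mul_sq_le_of_posSemidef {A : Matrix ι ι ℝ} {d d' : ι → ℝ}
    (h : (Aᵀ * diagonal d * A - diagonal d').PosSemidef) (u : ι → ℝ) :
    ∑ i, d' i * u i ^ 2 ≤ ∑ i, d i * (A *ᵥ u) i ^ 2 := by
  have hu := h.dotProduct_mulVec_nonneg u
  rw [star_trivial, sub_mulVec, dotProduct_sub, ← mulVec_mulVec, ← mulVec_mulVec,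
    dotProduct_mulVec u Aᵀ, vecMul_transpose, sub_nonneg] at hu
  simpa only [dotProduct, mulVec_diagonal, sq, mul_left_comm] using hu

lemma sum_mul_normSq_le_of_posSemidef {A : Matrix ι ι ℝ} {d d' : ι → ℝ}
    (h : (Aᵀ * diagonal d * A - diagonal d').PosSemidef) (x : ι → ℂ) :
    ∑ i, d' i * normSq (x i) ≤ ∑ i, d i * normSq ((A.map ofReal *ᵥ x) i) := by
  have hre := sum_mul_sq_le_of_posSemidef h fun i => (x i).re
  have him := sum_mul_sq_le_of_posSemidef h fun i => (x i).im
  simp only [normSq_apply, re_map_ofReal_mulVec, im_map_ofReal_mulVec, ← sq, mul_add,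
    Finset.sum_add_distrib]
  exact add_le_add hre him

end RealMatrix

section SymplecticGroup

variable {l : Type*} [Fintype l]

lemma sum_normSq_modeMinus_sub_normSq_modePlus_mulVec [DecidableEq l]
    {A : Matrix (l ⊕ l) (l ⊕ l) ℝ} (hA : A ∈ symplecticGroup l ℝ) (x : l ⊕ l → ℂ) :
    ∑ j, (normSq (modeMinus j (A.map ofReal *ᵥ x)) - normSq (modePlus j (A.map ofReal *ᵥ x))) =
      ∑ j, (normSq (modeMinus j x) - normSq (modePlus j x)) := by
  simp only [sum_normSq_modeMinus_sub_normSq_modePlus, re_map_ofReal_mulVec,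
    im_map_ofReal_mulVec]
  rw [dotProduct_mulVec_mulVec_of_transpose_mul_mul (SymplecticGroup.mem_iff'.mp hA)]

variable [LinearOrder l]

lemma exists_ne_zero_modePlus_modeMinus_eq_zero (B : (l ⊕ l → ℂ) →ₗ[ℂ] l ⊕ l → ℂ) (k : l) :
    ∃ x ≠ 0, (∀ j, modePlus j (B x) = 0) ∧ (∀ j < k, modeMinus j (B x) = 0) ∧
      ∀ j, k < j → modeMinus j x = 0 := by
  let f : l ⊕ {j // j ≠ k} → (l ⊕ l → ℂ) →ₗ[ℂ] ℂ :=
    Sum.elim (fun j => modePlus j ∘ₗ B)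
      fun j => if j.1 < k then modeMinus j.1 ∘ₗ B else modeMinus j.1
  have hcard : Fintype.card (l ⊕ {j // j ≠ k}) < Module.finrank ℂ (l ⊕ l → ℂ) := by
    rw [Module.finrank_fintype_fun_eq_card, Fintype.card_sum, Fintype.card_sum]
    have := Fintype.card_subtype_lt (p := fun j => j ≠ k) (not_not.mpr rfl)
    omega
  obtain ⟨x, hx0, hx⟩ := exists_ne_zero_forall_apply_eq_zero f hcard
  refine ⟨x, hx0, fun j => hx (.inl j), fun j hj => ?_, fun j hj => ?_⟩
  · simpa [f, hj] using hx (.inr ⟨j, hj.ne⟩)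
  · simpa [f, hj.not_gt] using hx (.inr ⟨j, hj.ne'⟩)

theorem le_of_posSemidef_transpose_mul_diagonal_mul_sub {A : Matrix (l ⊕ l) (l ⊕ l) ℝ}
    (hA : A ∈ symplecticGroup l ℝ) {d d' : l → ℝ} (hd : Antitone d) (hd' : Antitone d')
    (hd'_pos : ∀ j, 0 < d' j)
    (h : (Aᵀ * diagonal (Sum.elim d d) * A - diagonal (Sum.elim d' d')).PosSemidef) :
    d' ≤ d := by
  intro k
  obtain ⟨x, hx0, hplus, hminus_lt, hminus_gt⟩ :=
    exists_ne_zero_modePlus_modeMinus_eq_zero (A.map ofReal).mulVecLin k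
  simp only [mulVecLin_apply] at hplus hminus_lt
  set z := A.map ofReal *ᵥ x
  refine le_of_weighted_mode_sums (p := fun j => normSq (modeMinus j x))
    (q := fun j => normSq (modePlus j x)) (p' := fun j => normSq (modeMinus j z)) hd hd' hd'_pos
    (fun _ => normSq_nonneg _) (fun _ => normSq_nonneg _) (fun _ => normSq_nonneg _) ?_
    (fun j hj => by simp [hminus_gt j hj]) (fun j hj => by simp [hminus_lt j hj]) ?_ ?_
  · obtain ⟨i, hi⟩ := Function.ne_iff.mp hx0
    have hi := normSq_pos.mpr hi
    obtain ⟨j, rfl | rfl⟩ : ∃ j, i = .inl j ∨ i = .inr j := by cases i <;> simp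
    all_goals
      refine ⟨j, ?_⟩
      rw [normSq_modeMinus_add_normSq_modePlus]
      nlinarith [normSq_nonneg (x (.inl j)), normSq_nonneg (x (.inr j))]
  · rw [← sum_normSq_modeMinus_sub_normSq_modePlus_mulVec hA x]
    simp only [z, hplus, map_zero, sub_zero]
  · calc ∑ j, d' j * (normSq (modeMinus j x) + normSq (modePlus j x))
        = 2 * ∑ i, Sum.elim d' d' i * normSq (x i) :=
          sum_mul_normSq_modeMinus_add_normSq_modePlus d' x
      _ ≤ 2 * ∑ i, Sum.elim d d i * normSq (z i) :=
          mul_le_mul_of_nonneg_left (sum_mul_normSq_le_of_posSemidef h x) zero_le_two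
      _ = ∑ j, d j * (normSq (modeMinus j z) + normSq (modePlus j z)) :=
          (sum_mul_normSq_modeMinus_add_normSq_modePlus d z).symm
      _ = ∑ j, d j * normSq (modeMinus j z) := by simp only [hplus, map_zero, add_zero]

end SymplecticGroup

def interleaveEquiv (n : ℕ) : Fin n ⊕ Fin n ≃ Fin (2 * n) where
  toFun := Sum.elim (fun j => ⟨2 * j, by omega⟩) fun j => ⟨2 * j + 1, by omega⟩
  invFun i := if i.val % 2 = 0 then .inl ⟨i / 2, by omega⟩ else .inr ⟨i / 2, by omega⟩
  left_inv := by rintro (j | j) <;> simp [Fin.ext_iff]; omega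
  right_inv i := by
    by_cases h : i.val % 2 = 0 <;> simp [h, Fin.ext_iff] <;> omega

lemma symp_submatrix_interleaveEquiv (n : ℕ) :
    (symp n).submatrix (interleaveEquiv n) (interleaveEquiv n) = J (Fin n) ℝ := by
  ext (i | i) (j | j) <;> simp [symp, J, interleaveEquiv, one_apply, Fin.ext_iff] <;> grind

lemma cmat_submatrix_interleaveEquiv {n : ℕ} (r : Fin n → ℝ) :
    (cmat r).submatrix (interleaveEquiv n) (interleaveEquiv n) =
      diagonal (Sum.elim (Real.cosh ∘ r) (Real.cosh ∘ r)) := by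
  rw [cmat, submatrix_diagonal_equiv]
  congr 1
  ext (j | j) <;> simp [interleaveEquiv, Nat.mul_add_div]

lemma Antitone.cosh_comp {ι : Type*} [Preorder ι] {r : ι → ℝ} (hr : Antitone r)
    (hr0 : ∀ i, 0 ≤ r i) : Antitone (Real.cosh ∘ r) := fun i j hij => by
  simpa only [Function.comp_apply, Real.cosh_le_cosh, abs_of_nonneg (hr0 _)] using hr hij

theorem symplectic_congruence_domination_general (n : ℕ) (r r' : Fin n → ℝ)
    (hr : ∀ i j : Fin n, i ≤ j → r j ≤ r i) (hr0 : ∀ k, 0 ≤ r k)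
    (hr' : ∀ i j : Fin n, i ≤ j → r' j ≤ r' i) (hr'0 : ∀ k, 0 ≤ r' k)
    (S : Matrix (Fin (2 * n)) (Fin (2 * n)) ℝ)
    (hS : S * symp n * Sᵀ = symp n)
    (hpsd : (Sᵀ * cmat r * S - cmat r').PosSemidef) :
    ∀ k, r' k ≤ r k := by
  set e := interleaveEquiv n
  have hA : S.submatrix e e ∈ symplecticGroup (Fin n) ℝ := by
    rw [SymplecticGroup.mem_iff, ← symp_submatrix_interleaveEquiv, transpose_submatrix,
      submatrix_mul_equiv, submatrix_mul_equiv, hS]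
  have hpsd' := (posSemidef_submatrix_equiv e).mpr hpsd
  rw [submatrix_sub, Pi.sub_apply, Pi.sub_apply, ← submatrix_mul_equiv (Sᵀ * cmat r) S e e e,
    ← submatrix_mul_equiv Sᵀ (cmat r) e e e, ← transpose_submatrix,
    cmat_submatrix_interleaveEquiv, cmat_submatrix_interleaveEquiv] at hpsd'
  intro k
  have hk := le_of_posSemidef_transpose_mul_diagonal_mul_sub hA (Antitone.cosh_comp hr hr0)
    (Antitone.cosh_comp hr' hr'0) (fun _ => Real.cosh_pos _) hpsd' k
  rw [Function.comp_apply, Function.comp_apply, Real.cosh_le_cosh, abs_of_nonneg (hr0 k)] at hk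
  exact (le_abs_self _).trans hk

/-- If `S` is symplectic and `Sᵀ·c(r)·S - c(r') ≥ 0` for ordered squeezing vectors
`r₁ ≥ … ≥ r_n ≥ 0` and `r'₁ ≥ … ≥ r'_n ≥ 0`, then `r_k ≥ r'_k` for every `k`. -/
theorem symplectic_congruence_domination (n : ℕ) (hn : 1 ≤ n) (r r' : Fin n → ℝ)
    (hr : ∀ i j : Fin n, i ≤ j → r j ≤ r i) (hr0 : ∀ k, 0 ≤ r k)
    (hr' : ∀ i j : Fin n, i ≤ j → r' j ≤ r' i) (hr'0 : ∀ k, 0 ≤ r' k)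
    (S : Matrix (Fin (2 * n)) (Fin (2 * n)) ℝ)
    (hS : S * symp n * Sᵀ = symp n)
    (hpsd : (Sᵀ * cmat r * S - cmat r').PosSemidef) :
    ∀ k, r' k ≤ r k :=
  symplectic_congruence_domination_general n r r' hr hr0 hr' hr'0 S hS hpsd
end

section
/- Let r > r' ≥ 0 be real numbers and set c'' := (cosh(r)·cosh(r') − 1)/(cosh(r) − cosh(r')). Then: (i) c'' ≥ 1, with equality if and only if r' = 0; (ii) the number s'' := √(c''² − 1) satisfies s'' = sinh(r)·sinh(r')/(cosh(r) − cosh(r')); (iii) (c''·cosh(r) + 1)/(c'' + cosh(r)) = cosh(r'); (iv) cosh(r) − sinh(r)²/(c'' + cosh(r)) = cosh(r'); and (v) s''·sinh(r)/(c'' + cosh(r)) = sinh(r'). -/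
/-!
With `a = cosh r`, `b = cosh r'` and `a > b ≥ 1`, every claim is a rational identity in `a, b`
once `sinh² = cosh² - 1` is used: `c'' + a = (a² - 1)/(a - b)`, `c'' - 1 = (a + 1)(b - 1)/(a - b)`,
`c''² - 1 = (a² - 1)(b² - 1)/(a - b)²` and `c'' a + 1 = b (a² - 1)/(a - b)`.
-/

section Field

variable {K : Type*} [Field K] {a b : K}

/-- The paper's `c'' = cosh r''`, for `a = cosh r` and `b = cosh r'`. -/
def unilateralCosh (a b : K) : K := (a * b - 1) / (a - b)

lemma unilateralCosh_add_left (h : a ≠ b) :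
    unilateralCosh a b + a = (a ^ 2 - 1) / (a - b) := by
  have := sub_ne_zero.2 h
  rw [unilateralCosh]
  field_simp
  ring

lemma unilateralCosh_sub_one (h : a ≠ b) :
    unilateralCosh a b - 1 = (a + 1) * (b - 1) / (a - b) := by
  have := sub_ne_zero.2 h
  rw [unilateralCosh]
  field_simp
  ring

lemma unilateralCosh_sq_sub_one (h : a ≠ b) :
    unilateralCosh a b ^ 2 - 1 = (a ^ 2 - 1) * (b ^ 2 - 1) / (a - b) ^ 2 := by
  have := sub_ne_zero.2 h
  rw [unilateralCosh]
  field_simp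
  ring

lemma unilateralCosh_mul_add_one (h : a ≠ b) :
    unilateralCosh a b * a + 1 = b * (a ^ 2 - 1) / (a - b) := by
  have := sub_ne_zero.2 h
  rw [unilateralCosh]
  field_simp
  ring

lemma unilateralCosh_eq_one_iff (h : a ≠ b) (ha : a + 1 ≠ 0) :
    unilateralCosh a b = 1 ↔ b = 1 := by
  rw [← sub_eq_zero, unilateralCosh_sub_one h, div_eq_zero_iff, mul_eq_zero]
  simp [ha, sub_eq_zero, h]

end Field

lemma one_le_unilateralCosh {a b : ℝ} (hb : 1 ≤ b) (hab : b < a) : 1 ≤ unilateralCosh a b := by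
  rw [← sub_nonneg, unilateralCosh_sub_one hab.ne']
  exact div_nonneg (mul_nonneg (by linarith) (sub_nonneg.2 hb)) (sub_pos.2 hab).le

lemma Real.cosh_eq_one_iff {x : ℝ} : Real.cosh x = 1 ↔ x = 0 :=
  ⟨fun h => by_contra fun hx => (Real.one_lt_cosh.2 hx).ne' h, fun h => h ▸ Real.cosh_zero⟩

/-- **Hyperbolic identities for the unilateral two-mode squeezing transformation.**
For `r > r' ≥ 0` and `c'' = (cosh r · cosh r' − 1)/(cosh r − cosh r')`,
`s'' = √(c''² − 1)`:
(i) `c'' ≥ 1` with equality iff `r' = 0`;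
(ii) `s'' = sinh r · sinh r'/(cosh r − cosh r')`;
(iii) `(c''·cosh r + 1)/(c'' + cosh r) = cosh r'`;
(iv) `cosh r − sinh²r/(c'' + cosh r) = cosh r'`;
(v) `s''·sinh r/(c'' + cosh r) = sinh r'`. -/
theorem tmss_unilateral_identities (r r' c'' s'' : ℝ) (hr' : 0 ≤ r') (hrr' : r' < r)
    (hc : c'' = (Real.cosh r * Real.cosh r' - 1) / (Real.cosh r - Real.cosh r'))
    (hs : s'' = Real.sqrt (c'' ^ 2 - 1)) :
    (1 ≤ c'' ∧ (c'' = 1 ↔ r' = 0)) ∧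
    s'' = Real.sinh r * Real.sinh r' / (Real.cosh r - Real.cosh r') ∧
    (c'' * Real.cosh r + 1) / (c'' + Real.cosh r) = Real.cosh r' ∧
    Real.cosh r - Real.sinh r ^ 2 / (c'' + Real.cosh r) = Real.cosh r' ∧
    s'' * Real.sinh r / (c'' + Real.cosh r) = Real.sinh r' := by
  replace hc : c'' = unilateralCosh (Real.cosh r) (Real.cosh r') := hc
  have hr : 0 < r := hr'.trans_lt hrr'
  have hlt : Real.cosh r' < Real.cosh r := by
    rwa [Real.cosh_lt_cosh, abs_of_nonneg hr', abs_of_pos hr]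
  have hne := hlt.ne'
  have hd : 0 < Real.cosh r - Real.cosh r' := sub_pos.2 hlt
  have hsinh : Real.sinh r ≠ 0 := (Real.sinh_pos_iff.2 hr).ne'
  have hsum : c'' + Real.cosh r = Real.sinh r ^ 2 / (Real.cosh r - Real.cosh r') := by
    rw [hc, unilateralCosh_add_left hne, Real.sinh_sq]
  have hs'' : s'' = Real.sinh r * Real.sinh r' / (Real.cosh r - Real.cosh r') := by
    rw [hs, hc, unilateralCosh_sq_sub_one hne, ← Real.sinh_sq, ← Real.sinh_sq, ← mul_pow,
      ← div_pow, Real.sqrt_sq]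
    exact div_nonneg (mul_nonneg (Real.sinh_pos_iff.2 hr).le (Real.sinh_nonneg_iff.2 hr')) hd.le
  refine ⟨⟨hc ▸ one_le_unilateralCosh (Real.one_le_cosh r') hlt, ?_⟩, hs'', ?_, ?_, ?_⟩
  · rw [hc, unilateralCosh_eq_one_iff hne (by linarith [Real.one_le_cosh r]),
      Real.cosh_eq_one_iff]
  · rw [hc, unilateralCosh_mul_add_one hne, ← hc, hsum, ← Real.sinh_sq]
    field_simp
  · rw [hsum, div_div_cancel₀ (pow_ne_zero 2 hsinh), sub_sub_cancel]
  · rw [hs'', hsum]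
    field_simp
end

section
/- Let n ≥ 1 and let γ be a real symmetric 4n×4n matrix partitioned into 2n×2n blocks γ = [[A, C],[Cᵀ, B]]. If (γ · (σ_n ⊕ σ_n))² = −I_{4n}, then: (i) A σ_n A σ_n + C σ_n Cᵀ σ_n = −I_{2n}; (ii) B σ_n B σ_n + Cᵀ σ_n C σ_n = −I_{2n}; and (iii) the matrices A σ_n A σ_n and B σ_n B σ_n have the same characteristic polynomial. Consequently A and B have the same symplectic spectrum. -/
open Matrix Polynomial

section Aux

variable {m : Type*} [Fintype m] [DecidableEq m]

lemma eval_charpoly_eq (x : ℝ) (P : Matrix m m ℝ) :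
    (P.charpoly).eval x = (x • (1 : Matrix m m ℝ) - P).det := by
  rw [Matrix.charpoly, ← Polynomial.coe_evalRingHom, RingHom.map_det]
  congr 1
  ext i j
  by_cases h : i = j
  · subst h
    simp [Matrix.charmatrix_apply_eq, Matrix.one_apply]
  · simp [Matrix.charmatrix_apply_ne _ _ _ h, Matrix.one_apply, h]

lemma det_smul_one_add_mul_comm (c : ℝ) (M N : Matrix m m ℝ) :
    (c • (1 : Matrix m m ℝ) + M * N).det = (c • (1 : Matrix m m ℝ) + N * M).det := by
  rcases eq_or_ne c 0 with rfl | hc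
  · simp [Matrix.det_mul_comm, mul_comm]
  · have e1 : c • ((1 : Matrix m m ℝ) + (c⁻¹ • M) * N) = c • (1 : Matrix m m ℝ) + M * N := by
      rw [smul_add, Matrix.smul_mul, smul_smul, mul_inv_cancel₀ hc, one_smul]
    have e2 : c • ((1 : Matrix m m ℝ) + N * (c⁻¹ • M)) = c • (1 : Matrix m m ℝ) + N * M := by
      rw [smul_add, Matrix.mul_smul, smul_smul, mul_inv_cancel₀ hc, one_smul]
    rw [← e1, ← e2, Matrix.det_smul, Matrix.det_smul, Matrix.det_one_add_mul_comm]

lemma charpoly_neg_one_sub_mul_comm (M N : Matrix m m ℝ) :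
    (-1 - M * N : Matrix m m ℝ).charpoly = (-1 - N * M : Matrix m m ℝ).charpoly := by
  apply Polynomial.funext
  intro x
  rw [eval_charpoly_eq, eval_charpoly_eq]
  have h : ∀ P : Matrix m m ℝ, x • (1 : Matrix m m ℝ) - (-1 - P) = (x + 1) • 1 + P := by
    intro P
    rw [add_smul, one_smul]
    abel
  rw [h, h, det_smul_one_add_mul_comm]

end Aux

/-- **Equal symplectic spectra of the reductions of a pure state (part (a) of the proof of
Lemma 1).** If `γ = [[A,C],[Cᵀ,B]]` is real symmetric with `(γ·(σ_n ⊕ σ_n))² = -1`, then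
`AσAσ + CσCᵀσ = -1`, `BσBσ + CᵀσCσ = -1`, and `AσAσ` and `BσBσ` have the same
characteristic polynomial (hence `A` and `B` have the same symplectic spectrum). -/
theorem pure_state_blocks_same_symplectic_spectrum (n : ℕ) (hn : 1 ≤ n)
    (A B C : Matrix (Fin (2 * n)) (Fin (2 * n)) ℝ)
    (hA : A.IsSymm) (hB : B.IsSymm)
    (hpure : (Matrix.fromBlocks A C Cᵀ B * sympBig n) *
      (Matrix.fromBlocks A C Cᵀ B * sympBig n) = -1) :
    A * symp n * A * symp n + C * symp n * Cᵀ * symp n = -1 ∧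
    B * symp n * B * symp n + Cᵀ * symp n * C * symp n = -1 ∧
    (A * symp n * A * symp n).charpoly = (B * symp n * B * symp n).charpoly := by
  have hneg : Matrix.fromBlocks (-1 : Matrix (Fin (2*n)) (Fin (2*n)) ℝ) 0 0
      (-1 : Matrix (Fin (2*n)) (Fin (2*n)) ℝ) = -1 := by
    rw [← neg_zero, ← Matrix.fromBlocks_neg, Matrix.fromBlocks_one]
  rw [sympBig, Matrix.fromBlocks_multiply, Matrix.fromBlocks_multiply, ← hneg] at hpure
  simp only [Matrix.mul_zero, Matrix.zero_mul, add_zero, zero_add] at hpure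
  rw [Matrix.fromBlocks_inj] at hpure
  obtain ⟨h11, -, -, h22⟩ := hpure
  have h11' : A * symp n * A * symp n + C * symp n * Cᵀ * symp n = -1 := by
    rw [Matrix.mul_assoc (A * symp n), Matrix.mul_assoc (C * symp n)]; exact h11
  have h22' : B * symp n * B * symp n + Cᵀ * symp n * C * symp n = -1 := by
    rw [Matrix.mul_assoc (B * symp n), Matrix.mul_assoc (Cᵀ * symp n)]; exact (add_comm _ _).trans h22
  refine ⟨h11', h22', ?_⟩
  have e1 : A * symp n * A * symp n = -1 - (C * symp n) * (Cᵀ * symp n) := by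
    rw [Matrix.mul_assoc (A * symp n)]
    exact eq_sub_of_add_eq h11
  have e2 : B * symp n * B * symp n = -1 - (Cᵀ * symp n) * (C * symp n) := by
    rw [Matrix.mul_assoc (B * symp n)]
    exact eq_sub_of_add_eq ((add_comm _ _).trans h22)
  rw [e1, e2, charpoly_neg_one_sub_mul_comm]
end

section
/- For all real numbers λ, η ∈ (0,1), there exists a natural number K ≥ 1 such that Σ_{k=0}^{K−1} (1−η)·ηᵏ > Σ_{k=0}^{K−1} l(λ)_k. (By Nielsen's majorization criterion this shows that a two-mode squeezed state with parameter s tensored with a product state can never be transformed, even by arbitrary local operations and classical communication, into a tensor product of two two-mode squeezed states with parameter r > 0, for any s and r; here η = tanh²(s/2) and λ = tanh²(r/2).) -/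
/-- `jIdx k` is the unique `j` with `j(j+1)/2 ≤ k < (j+1)(j+2)/2`. -/
noncomputable def jIdx (k : ℕ) : ℕ :=
  Nat.find (⟨k, by
    have h2 : 2 * (k + 1) ≤ (k + 1) * (k + 2) := by nlinarith
    have h3 := Nat.div_le_div_right (c := 2) h2
    omega⟩ : ∃ j, k < (j + 1) * (j + 2) / 2)

/-- The ordered list of Schmidt coefficients of two copies of a two-mode squeezed state
with `λ = tanh²(r/2)`: the value `(1-λ)²·λʲ` occurs with multiplicity `j+1`. -/
noncomputable def schmidtTwoCopies (lam : ℝ) (k : ℕ) : ℝ := (1 - lam) ^ 2 * lam ^ jIdx k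

lemma jIdx_eq (j k : ℕ) (h1 : j * (j + 1) / 2 ≤ k) (h2 : k < (j + 1) * (j + 2) / 2) :
    jIdx k = j := by
  rw [jIdx, Nat.find_eq_iff]
  refine ⟨h2, fun n hn hc => ?_⟩
  have hle : (n + 1) * (n + 2) ≤ j * (j + 1) :=
    Nat.mul_le_mul (by omega) (by omega)
  have := Nat.div_le_div_right (c := 2) hle
  omega

lemma tri_succ (J : ℕ) : (J + 1) * (J + 2) / 2 = J * (J + 1) / 2 + (J + 1) := by
  have h : (J + 1) * (J + 2) = J * (J + 1) + (J + 1) * 2 := by ring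
  rw [h, Nat.add_mul_div_right _ _ (by norm_num)]

lemma sum_schmidt (lam : ℝ) (J : ℕ) :
    ∑ k ∈ Finset.range (J * (J + 1) / 2), schmidtTwoCopies lam k
      = ∑ j ∈ Finset.range J, ((j : ℝ) + 1) * ((1 - lam) ^ 2 * lam ^ j) := by
  induction J with
  | zero => simp
  | succ J ih =>
    rw [Finset.sum_range_succ, ← ih, tri_succ, Finset.range_eq_Ico,
      ← Finset.sum_Ico_consecutive _ (Nat.zero_le _) (Nat.le_add_right _ _),
      ← Finset.range_eq_Ico]
    congr 1
    have hconst : ∀ k ∈ Finset.Ico (J * (J + 1) / 2) (J * (J + 1) / 2 + (J + 1)),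
        schmidtTwoCopies lam k = (1 - lam) ^ 2 * lam ^ J := by
      intro k hk
      rw [Finset.mem_Ico] at hk
      rw [schmidtTwoCopies, jIdx_eq J k hk.1 (by rw [tri_succ]; omega)]
    rw [Finset.sum_congr rfl hconst, Finset.sum_const, Nat.card_Ico,
      Nat.add_sub_cancel_left, nsmul_eq_mul]
    push_cast
    ring

lemma sum_closed (lam : ℝ) (J : ℕ) :
    ∑ j ∈ Finset.range J, ((j : ℝ) + 1) * ((1 - lam) ^ 2 * lam ^ j)
      = 1 - ((J : ℝ) + 1) * lam ^ J + (J : ℝ) * lam ^ (J + 1) := by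
  induction J with
  | zero => simp
  | succ J ih =>
    rw [Finset.sum_range_succ, ih]
    push_cast
    ring

lemma geom_partial (eta : ℝ) (K : ℕ) :
    ∑ k ∈ Finset.range K, (1 - eta) * eta ^ k = 1 - eta ^ K := by
  induction K with
  | zero => simp
  | succ K ih => rw [Finset.sum_range_succ, ih]; ring

/-- **Dilution of two-mode squeezing is impossible even under general LOCC.** For all
`λ, η ∈ (0,1)` there is a `K ≥ 1` for which the sum of the first `K` Schmidt coefficients
`(1-η)ηᵏ` of a single two-mode squeezed state strictly exceeds the corresponding partial
sum of the ordered Schmidt coefficients of two copies of a two-mode squeezed state; by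
Nielsen's criterion the transformation `ρ_s ⊗ ρ_0 → ρ_r ⊗ ρ_r` is impossible under LOCC. -/
theorem dilution_impossible_LOCC (lam eta : ℝ)
    (hlam0 : 0 < lam) (hlam1 : lam < 1) (heta0 : 0 < eta) (heta1 : eta < 1) :
    ∃ K : ℕ, 1 ≤ K ∧
      ∑ k ∈ Finset.range K, schmidtTwoCopies lam k <
        ∑ k ∈ Finset.range K, (1 - eta) * eta ^ k := by
  obtain ⟨m0, hm0⟩ := exists_pow_lt_of_lt_one (by linarith : (0:ℝ) < lam / 2) heta1
  set m := m0 + 1 with hm_def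
  have hmle : eta ^ m ≤ lam / 2 := by
    calc eta ^ m ≤ eta ^ m0 :=
          pow_le_pow_of_le_one heta0.le heta1.le (by omega)
      _ ≤ lam / 2 := hm0.le
  refine ⟨m * (2 * m + 1), by nlinarith, ?_⟩
  have hK : m * (2 * m + 1) = (2 * m) * (2 * m + 1) / 2 := by
    have h : (2 * m) * (2 * m + 1) = 2 * (m * (2 * m + 1)) := by ring
    rw [h, Nat.mul_div_cancel_left _ (by norm_num)]
  rw [geom_partial, hK, sum_schmidt, sum_closed]
  have hsplit : eta ^ (m * (2 * m + 1)) = (eta ^ m) ^ (2 * m) * eta ^ m := by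
    rw [show m * (2 * m + 1) = m * (2 * m) + m by ring, pow_add, pow_mul]
  have hem : (0:ℝ) < eta ^ m := pow_pos heta0 m
  have h1 : eta ^ (m * (2 * m + 1)) ≤ (lam / 2) ^ (2 * m) := by
    rw [hsplit]
    calc (eta ^ m) ^ (2 * m) * eta ^ m
        ≤ (lam / 2) ^ (2 * m) * 1 :=
          mul_le_mul (pow_le_pow_left₀ hem.le hmle _)
            (pow_le_one₀ heta0.le heta1.le) hem.le (by positivity)
      _ = (lam / 2) ^ (2 * m) := mul_one _
  have h2 : (lam / 2) ^ (2 * m) < lam ^ (2 * m) :=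
    pow_lt_pow_left₀ (by linarith) (by positivity) (by omega)
  have h3 : lam ^ (2 * m) ≤ ((2 * m : ℕ) + 1 : ℝ) * lam ^ (2 * m)
      - (2 * m : ℕ) * lam ^ (2 * m + 1) := by
    have hp : (0:ℝ) ≤ lam ^ (2 * m) := by positivity
    have he : lam ^ (2 * m + 1) = lam ^ (2 * m) * lam := by ring
    have key : (0:ℝ) ≤ ((2 * m : ℕ) : ℝ) * (lam ^ (2 * m) * (1 - lam)) := by
      apply mul_nonneg (by positivity)
      exact mul_nonneg hp (by linarith)
    nlinarith [key]
  rw [hK] at h1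
  linarith
end

section
/- Let n, m ≥ 0, let r, r' ∈ ℝⁿ and t ∈ ℝᵐ. Let u, u' ∈ ℝ^{n+m} be the nonincreasing rearrangements of the concatenations (r₁,…,r_n,t₁,…,t_m) and (r'₁,…,r'_n,t₁,…,t_m) respectively, and let r↓, r'↓ ∈ ℝⁿ be the nonincreasing rearrangements of r and r'. If u_k ≥ u'_k for every k = 1, …, n+m, then r↓_k ≥ r'↓_k for every k = 1, …, n. (This is the combinatorial content of the statement that catalysis is impossible under the entrywise-domination criterion for Gaussian pure-state transformations: if the squeezing vector of ρ⊗ω dominates that of ρ'⊗ω, then the squeezing vector of ρ already dominates that of ρ'.) -/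
/-!
The `j`-th entry of a nonincreasing rearrangement is `≥ a` exactly when more than `j` entries
are `≥ a`, and counts of entries `≥ a` add up under concatenation. Take `a = r'↓ₖ` and let `j`
count the entries of `t` that are `≥ a`. Then `(r', t)` has more than `k + j` entries `≥ a`, so
its sorted entry at position `k + j` is `≥ a`; by domination so is that of `(r, t)`, hence `r`
has more than `k` entries `≥ a`, i.e. `r↓ₖ ≥ a`.
-/

/-- The nonincreasing rearrangement of a finite tuple of reals: sort ascendingly with
`Tuple.sort` and then reverse. -/
noncomputable def sortDesc {k : ℕ} (f : Fin k → ℝ) : Fin k → ℝ :=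
  fun i => (f ∘ Tuple.sort f) i.rev

open Finset

theorem Finset.card_filter_comp_equiv {α β : Type*} [Fintype α] (e : α ≃ α) (f : α → β)
    (p : β → Prop) [DecidablePred p] : #{i | p (f (e i))} = #{i | p (f i)} :=
  card_equiv e (by simp)

theorem Fin.card_filter_append {α : Type*} {n m : ℕ} (r : Fin n → α) (t : Fin m → α)
    (p : α → Prop) [DecidablePred p] :
    #{i | p (Fin.append r t i)} = #{i | p (r i)} + #{j | p (t j)} := by
  simp only [card_filter, Fin.sum_univ_add, Fin.append_left, Fin.append_right]

theorem sortDesc_antitone {k : ℕ} (f : Fin k → ℝ) : Antitone (sortDesc f) :=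
  fun _ _ hij => Tuple.monotone_sort f (Fin.rev_le_rev.mpr hij)

theorem le_sortDesc_iff_lt_card {k : ℕ} (f : Fin k → ℝ) (a : ℝ) (j : Fin k) :
    a ≤ sortDesc f j ↔ (j : ℕ) < #{i | a ≤ f i} := by
  rw [← Tuple.lt_card_ge_iff_apply_ge_of_antitone (sortDesc_antitone f),
    ← card_filter_comp_equiv (Fin.revPerm.trans (Tuple.sort f)) f]
  rfl

/-- **No catalysis for the entrywise-domination criterion.** If the nonincreasing
rearrangement of `(r, t)` dominates entrywise that of `(r', t)`, then the nonincreasing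
rearrangement of `r` already dominates that of `r'`: appending a fixed catalyst vector `t`
cannot create entrywise domination of sorted squeezing vectors. -/
theorem no_catalysis (n m : ℕ) (r r' : Fin n → ℝ) (t : Fin m → ℝ)
    (h : ∀ k : Fin (n + m), sortDesc (Fin.append r' t) k ≤ sortDesc (Fin.append r t) k) :
    ∀ k : Fin n, sortDesc r' k ≤ sortDesc r k := by
  intro k
  set a := sortDesc r' k
  set j := #{i | a ≤ t i}
  have hr'_count : (k : ℕ) < #{i | a ≤ r' i} := (le_sortDesc_iff_lt_card r' a k).mp le_rfl
  have hj : j ≤ m := (card_filter_le _ _).trans_eq (card_fin m)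
  let kj : Fin (n + m) := ⟨k + j, by omega⟩
  have ha_le_append : a ≤ sortDesc (Fin.append r' t) kj := by
    rw [le_sortDesc_iff_lt_card, Fin.card_filter_append]
    exact Nat.add_lt_add_right hr'_count j
  have hr_count : (k : ℕ) + j < #{i | a ≤ r i} + j := by
    rw [← Fin.card_filter_append, ← le_sortDesc_iff_lt_card _ a kj]
    exact ha_le_append.trans (h kj)
  exact (le_sortDesc_iff_lt_card r a k).mpr (by omega)
end
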